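/- For f : (0,∞) → ℂ with x ↦ f(x)x^s integrable with respect to dx/x, define f̂(s) = ∫₀^∞ f(x) x^s dx/x. Then for Re s > 1 and f in the weighted Schwartz space 𝒮_> (so that all integrals converge absolutely), the Zeta operator satisfies (Zf)^(s) = ζ(s) · f̂(s). -/

import Mathlib

open MeasureTheory Set Real Complex

/-- `f ∈ 𝒮(ℝ₊ˣ)_s`: `x ↦ f x · x^s` is Schwartz on the multiplicative group
`(0,∞) ≅ ℝ` via `ln`. -/
def MemWS (s : ℝ) (f : ℝ → ℂ) : Prop :=
  ∃ φ : SchwartzMap ℝ ℂ,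
    ∀ t : ℝ, φ t = f (Real.exp t) * ((Real.exp t ^ s : ℝ) : ℂ)

private theorem exp_image_aux : rexp '' univ = Ioi 0 := by
  rw [image_univ, Real.range_exp]

private theorem exp_deriv_aux : ∀ x ∈ (univ : Set ℝ), HasDerivWithinAt rexp (rexp x) univ x :=
  fun x _ => (Real.hasDerivAt_exp x).hasDerivWithinAt

private theorem scalar_aux (s : ℂ) (t : ℝ) :
    (rexp t : ℂ) * ((rexp t : ℝ) : ℂ) ^ (s - 1) =
      ((rexp t ^ s.re : ℝ) : ℂ) * cexp (t * s.im * I) := by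
  have h2 : ((rexp t : ℝ) : ℂ) ^ (s - 1) = cexp (t * (s - 1)) := by
    rw [Complex.ofReal_exp, Complex.cpow_def_of_ne_zero (Complex.exp_ne_zero _),
      Complex.log_exp (by simp [Real.pi_pos]) (by simp [Real.pi_nonneg])]
  have h3 : ((rexp t ^ s.re : ℝ) : ℂ) = cexp (t * s.re) := by
    rw [Real.rpow_def_of_pos (Real.exp_pos t), Real.log_exp, Complex.ofReal_exp]
    push_cast
    ring_nf
  rw [h2, h3, Complex.ofReal_exp, ← Complex.exp_add, ← Complex.exp_add]
  congr 1
  have hsre : (s : ℂ) = (s.re : ℂ) + s.im * I := (Complex.re_add_im s).symm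
  rw [mul_sub, mul_one]
  nth_rewrite 1 [hsre]
  push_cast
  ring

/-- Integrability of the Mellin integrand from the weighted Schwartz condition. -/
private theorem mellinConvergent_of_memWS (f : ℝ → ℂ) (s : ℂ) (h : MemWS s.re f) :
    MellinConvergent f s := by
  obtain ⟨φ, hφ⟩ := h
  rw [MellinConvergent, ← exp_image_aux, integrableOn_image_iff_integrableOn_abs_deriv_smul
    MeasurableSet.univ exp_deriv_aux Real.exp_injective.injOn, integrableOn_univ]
  have key : (fun t : ℝ => |rexp t| • ((↑(rexp t) : ℂ) ^ (s - 1) • f (rexp t)))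
      = fun t : ℝ => φ t * cexp (t * s.im * I) := by
    funext t
    rw [hφ t, abs_of_pos (Real.exp_pos t), real_smul, smul_eq_mul, ← mul_assoc]
    calc (rexp t : ℂ) * ((rexp t : ℝ) : ℂ) ^ (s - 1) * f (rexp t)
        = ((rexp t ^ s.re : ℝ) : ℂ) * cexp (t * s.im * I) * f (rexp t) := by
          rw [scalar_aux s t]
      _ = f (rexp t) * ((rexp t ^ s.re : ℝ) : ℂ) * cexp (t * s.im * I) := by ring
  rw [key]
  refine (φ.integrable.norm.mono' ?_ ?_)
  · exact (φ.continuous.mul (Complex.continuous_exp.comp (by fun_prop))).aestronglyMeasurable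
  · filter_upwards with t
    rw [norm_mul]
    simp [Complex.norm_exp]

/-- For `f ∈ 𝒮_> = ⋂_{s>1} 𝒮(ℝ₊ˣ)_s` and `Re s > 1`, the Mellin transform of
`Zf(x) = ∑_{n≥1} f(nx)` is `ζ(s)·f̂(s)`, where `f̂(s) = ∫₀^∞ f x · x^s dx/x`. -/
theorem mellin_zetaOperator (f : ℝ → ℂ) (hf : ∀ σ : ℝ, 1 < σ → MemWS σ f)
    (s : ℂ) (hs : 1 < s.re) :
    ∫ x in Ioi (0 : ℝ), (∑' n : ℕ+, f (n * x)) * (x : ℂ) ^ s / (x : ℂ)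
      = riemannZeta s * ∫ x in Ioi (0 : ℝ), f x * (x : ℂ) ^ s / (x : ℂ) := by
  have hconv : MellinConvergent f s := mellinConvergent_of_memWS f s (hf s.re hs)
  have hint_eq : ∀ g : ℝ → ℂ, (∫ x in Ioi (0:ℝ), g x * (x:ℂ)^s / (x:ℂ)) = mellin g s := by
    intro g
    rw [mellin]
    refine setIntegral_congr_fun measurableSet_Ioi (fun x hx => ?_)
    have hx0 : (x : ℂ) ≠ 0 := by exact_mod_cast ne_of_gt (mem_Ioi.mp hx)
    rw [smul_eq_mul, Complex.cpow_sub _ _ hx0, Complex.cpow_one]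
    ring
  set F : ℕ+ → ℝ → ℂ := fun n x => (x : ℂ) ^ (s - 1) • f (n * x) with hF
  have hnpos : ∀ n : ℕ+, (0:ℝ) < (n : ℕ) := fun n => by exact_mod_cast n.pos
  have hFint : ∀ n : ℕ+, IntegrableOn (F n) (Ioi 0) :=
    fun n => (MellinConvergent.comp_mul_left (f := f) (s := s) (hnpos n)).mpr hconv
  -- norm integral scaling
  set G : ℝ → ℝ := fun y => ‖(y : ℂ) ^ (s - 1) • f y‖ with hG
  have hnorm : ∀ n : ℕ+, (∫ x in Ioi (0:ℝ), ‖F n x‖)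
      = ((n:ℕ):ℝ) ^ (-s.re) * ∫ y in Ioi (0:ℝ), G y := by
    intro n
    have hcong : ∀ x ∈ Ioi (0:ℝ), ‖F n x‖ = ((n:ℕ):ℝ) ^ (1 - s.re) • G ((n:ℕ) * x) := by
      intro x hx
      have hx' : (0:ℝ) < x := hx
      have hnx : (0:ℝ) < (n:ℕ) * x := mul_pos (hnpos n) hx'
      simp only [hF, hG, smul_eq_mul, norm_mul]
      rw [Complex.norm_cpow_eq_rpow_re_of_pos hx' (s - 1),
        Complex.norm_cpow_eq_rpow_re_of_pos hnx (s - 1),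
        Complex.sub_re, Complex.one_re, Real.mul_rpow (hnpos n).le hx'.le,
        ← mul_assoc, ← mul_assoc, ← Real.rpow_add (hnpos n),
        show (1 - s.re) + (s.re - 1) = 0 by ring, Real.rpow_zero, one_mul]
    rw [setIntegral_congr_fun measurableSet_Ioi hcong, integral_smul,
      integral_comp_mul_left_Ioi G 0 (hnpos n), mul_zero, smul_eq_mul, smul_eq_mul,
      ← mul_assoc, ← Real.rpow_neg_one ((n:ℕ):ℝ), ← Real.rpow_add (hnpos n),
      show (1 - s.re) + (-1 : ℝ) = -s.re by ring]
  have hGnonneg : (0:ℝ) ≤ ∫ y in Ioi (0:ℝ), G y :=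
    integral_nonneg fun y => norm_nonneg _
  have hsum : Summable fun n : ℕ+ => ∫ x in Ioi (0:ℝ), ‖F n x‖ := by
    have h1 : Summable fun n : ℕ => ((n:ℝ)) ^ (-s.re) :=
      (Real.summable_nat_rpow).mpr (by linarith)
    have h2 : Summable fun n : ℕ+ => (((n:ℕ):ℝ)) ^ (-s.re) :=
      h1.comp_injective PNat.coe_injective
    simpa only [hnorm] using h2.mul_right _
  have hswap := MeasureTheory.integral_tsum_of_summable_integral_norm
    (μ := volume.restrict (Ioi (0:ℝ))) hFint hsum
  -- identify RHS of hswap with LHS of goal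
  have hLHS : (∫ x in Ioi (0:ℝ), (∑' n : ℕ+, f (n * x)) * (x : ℂ) ^ s / (x : ℂ))
      = ∫ x in Ioi (0:ℝ), ∑' n : ℕ+, F n x := by
    refine setIntegral_congr_fun measurableSet_Ioi (fun x hx => ?_)
    have hx0 : (x : ℂ) ≠ 0 := by exact_mod_cast ne_of_gt (mem_Ioi.mp hx)
    simp only [hF, smul_eq_mul]
    rw [tsum_mul_left, Complex.cpow_sub _ _ hx0, Complex.cpow_one]
    ring
  -- each term is a mellin transform
  have hterm : ∀ n : ℕ+, (∫ x in Ioi (0:ℝ), F n x)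
      = (((n:ℕ):ℝ):ℂ) ^ (-s) * mellin f s := by
    intro n
    have := mellin_comp_mul_left f s (hnpos n)
    rw [← smul_eq_mul, ← this]
    rfl
  -- zeta as a sum over ℕ+
  have hzeta : (∑' n : ℕ+, (((n:ℕ):ℝ):ℂ) ^ (-s)) = riemannZeta s := by
    rw [zeta_eq_tsum_one_div_nat_add_one_cpow hs]
    rw [← Equiv.tsum_eq Equiv.pnatEquivNat.symm (fun n : ℕ+ => (((n:ℕ):ℝ):ℂ) ^ (-s))]
    refine tsum_congr fun k => ?_
    have hk : ((Equiv.pnatEquivNat.symm k : ℕ+) : ℕ) = k + 1 := rfl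
    rw [hk, Complex.cpow_neg, one_div]
    norm_num
  calc ∫ x in Ioi (0:ℝ), (∑' n : ℕ+, f (n * x)) * (x : ℂ) ^ s / (x : ℂ)
      = ∑' n : ℕ+, ∫ x in Ioi (0:ℝ), F n x := by rw [hLHS, ← hswap]
    _ = ∑' n : ℕ+, (((n:ℕ):ℝ):ℂ) ^ (-s) * mellin f s := tsum_congr hterm
    _ = (∑' n : ℕ+, (((n:ℕ):ℝ):ℂ) ^ (-s)) * mellin f s := tsum_mul_right
    _ = riemannZeta s * mellin f s := by rw [hzeta]
    _ = riemannZeta s * ∫ x in Ioi (0:ℝ), f x * (x : ℂ) ^ s / (x : ℂ) := by rw [hint_eq f]
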